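/- arXiv:2011.12794 — 4 statements merged into one kernel-verified Lean document; each statement's English description precedes it below -/
import Mathlib

section
/- For every nonzero integer λ and every natural number b ≥ 1, the quadruple of integers j₁ = -λb², j₂ = λ(b+1)², j₃ = λ(b²+b+1)², j₄ = λ(b+1)²b², with sign pattern σ₁ = σ₃ = +1 and σ₂ = σ₄ = -1, satisfies both the momentum resonance relation σ₁j₁ + σ₂j₂ + σ₃j₃ + σ₄j₄ = 0 and the frequency resonance relation σ₁√|j₁| + σ₂√|j₂| + σ₃√|j₃| + σ₄√|j₄| = 0. -/
/-- Benjamin-Feir resonances: for every nonzero integer `lam` and `b ≥ 1`, the quadruple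
`j₁ = -lam b², j₂ = lam (b+1)², j₃ = lam (b²+b+1)², j₄ = lam (b+1)² b²` with signs
`σ₁ = σ₃ = 1`, `σ₂ = σ₄ = -1` is a 4-wave resonance of the dispersion law `j ↦ √|j|`. -/
theorem benjamin_feir_resonances (lam : ℤ) (hlam : lam ≠ 0) (b : ℕ) (hb : 1 ≤ b)
    (j₁ j₂ j₃ j₄ : ℤ)
    (h₁ : j₁ = -lam * (b : ℤ) ^ 2)
    (h₂ : j₂ = lam * ((b : ℤ) + 1) ^ 2)
    (h₃ : j₃ = lam * ((b : ℤ) ^ 2 + b + 1) ^ 2)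
    (h₄ : j₄ = lam * ((b : ℤ) + 1) ^ 2 * (b : ℤ) ^ 2) :
    (1 : ℤ) * j₁ + (-1) * j₂ + 1 * j₃ + (-1) * j₄ = 0 ∧
    (1 : ℝ) * Real.sqrt |(j₁ : ℝ)| + (-1) * Real.sqrt |(j₂ : ℝ)|
      + 1 * Real.sqrt |(j₃ : ℝ)| + (-1) * Real.sqrt |(j₄ : ℝ)| = 0 := by
  subst h₁ h₂ h₃ h₄
  constructor
  · ring
  · have hB : (0:ℝ) ≤ (b:ℝ) := Nat.cast_nonneg b
    have hB1 : (0:ℝ) ≤ (b:ℝ) + 1 := by linarith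
    have hQ : (0:ℝ) ≤ (b:ℝ)^2 + b + 1 := by positivity
    have e : ∀ x : ℝ, 0 ≤ x → Real.sqrt |(lam:ℝ) * x^2| = Real.sqrt |(lam:ℝ)| * x := by
      intro x hx
      rw [abs_mul, Real.sqrt_mul (abs_nonneg _), abs_of_nonneg (by positivity : (0:ℝ) ≤ x^2),
        Real.sqrt_sq hx]
    have e₁ : Real.sqrt |((-lam * (b:ℤ)^2 : ℤ) : ℝ)| = Real.sqrt |(lam:ℝ)| * b := by
      push_cast
      rw [show -(lam:ℝ) * (b:ℝ)^2 = (lam:ℝ) * (-((b:ℝ)^2)) by ring]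
      rw [abs_mul, abs_neg, abs_of_nonneg (by positivity : (0:ℝ) ≤ (b:ℝ)^2),
        Real.sqrt_mul (abs_nonneg _), Real.sqrt_sq hB]
    have e₂ : Real.sqrt |((lam * ((b:ℤ)+1)^2 : ℤ) : ℝ)| = Real.sqrt |(lam:ℝ)| * ((b:ℝ)+1) := by
      push_cast; exact e _ hB1
    have e₃ : Real.sqrt |((lam * ((b:ℤ)^2 + b + 1)^2 : ℤ) : ℝ)|
        = Real.sqrt |(lam:ℝ)| * ((b:ℝ)^2 + b + 1) := by
      push_cast; exact e _ hQ
    have e₄ : Real.sqrt |((lam * ((b:ℤ)+1)^2 * (b:ℤ)^2 : ℤ) : ℝ)|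
        = Real.sqrt |(lam:ℝ)| * (((b:ℝ)+1) * b) := by
      push_cast
      rw [show (lam:ℝ) * ((b:ℝ)+1)^2 * (b:ℝ)^2 = (lam:ℝ) * (((b:ℝ)+1)*b)^2 by ring]
      exact e _ (by positivity)
    rw [e₁, e₂, e₃, e₄]
    ring
end

section
/- There are no 3-wave resonances for the gravity water waves dispersion law in infinite depth: there exist no nonzero integers j₁, j₂, j₃ and signs σ₁, σ₂, σ₃ ∈ {±1} such that σ₁j₁ + σ₂j₂ + σ₃j₃ = 0 and σ₁√|j₁| + σ₂√|j₂| + σ₃√|j₃| = 0. -/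
lemma sqrt_abs_add_lt (a b : ℤ) (ha : a ≠ 0) (hb : b ≠ 0) :
    Real.sqrt |((a + b : ℤ) : ℝ)| < Real.sqrt |(a : ℝ)| + Real.sqrt |(b : ℝ)| := by
  have hA : (0:ℝ) < |(a : ℝ)| := by positivity
  have hB : (0:ℝ) < |(b : ℝ)| := by positivity
  have hsA : 0 < Real.sqrt |(a : ℝ)| := Real.sqrt_pos.2 hA
  have hsB : 0 < Real.sqrt |(b : ℝ)| := Real.sqrt_pos.2 hB
  have h2A : Real.sqrt |(a : ℝ)| ^ 2 = |(a : ℝ)| := Real.sq_sqrt (abs_nonneg _)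
  have h2B : Real.sqrt |(b : ℝ)| ^ 2 = |(b : ℝ)| := Real.sq_sqrt (abs_nonneg _)
  have htri : |((a + b : ℤ) : ℝ)| ≤ |(a : ℝ)| + |(b : ℝ)| := by
    push_cast; exact abs_add_le _ _
  rw [show ((a + b : ℤ) : ℝ) = (a : ℝ) + (b : ℝ) by push_cast; ring] at htri ⊢
  rw [Real.sqrt_lt' (by linarith)]
  nlinarith [mul_pos hsA hsB]

/-- There are no 3-wave resonances for the dispersion law `j ↦ √|j|`. -/
theorem no_three_wave_resonances :
    ¬ ∃ (j₁ j₂ j₃ : ℤ) (σ₁ σ₂ σ₃ : ℤ),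
      j₁ ≠ 0 ∧ j₂ ≠ 0 ∧ j₃ ≠ 0 ∧
      (σ₁ = 1 ∨ σ₁ = -1) ∧ (σ₂ = 1 ∨ σ₂ = -1) ∧ (σ₃ = 1 ∨ σ₃ = -1) ∧
      σ₁ * j₁ + σ₂ * j₂ + σ₃ * j₃ = 0 ∧
      (σ₁ : ℝ) * Real.sqrt |(j₁ : ℝ)| + (σ₂ : ℝ) * Real.sqrt |(j₂ : ℝ)|
        + (σ₃ : ℝ) * Real.sqrt |(j₃ : ℝ)| = 0 := by
  rintro ⟨j₁, j₂, j₃, σ₁, σ₂, σ₃, h1, h2, h3, hs1, hs2, hs3, hm, hf⟩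
  have p1 : 0 < Real.sqrt |(j₁ : ℝ)| := Real.sqrt_pos.2 (by positivity)
  have p2 : 0 < Real.sqrt |(j₂ : ℝ)| := Real.sqrt_pos.2 (by positivity)
  have p3 : 0 < Real.sqrt |(j₃ : ℝ)| := Real.sqrt_pos.2 (by positivity)
  rcases hs1 with rfl | rfl <;> rcases hs2 with rfl | rfl <;> rcases hs3 with rfl | rfl <;>
    push_cast at hf
  · linarith
  · -- (+,+,-): j₃ = j₁ + j₂
    have h : j₃ = j₁ + j₂ := by linarith
    rw [h] at hf
    have := sqrt_abs_add_lt j₁ j₂ h1 h2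
    linarith
  · have h : j₂ = j₁ + j₃ := by linarith
    rw [h] at hf
    have := sqrt_abs_add_lt j₁ j₃ h1 h3
    linarith
  · have h : j₁ = j₂ + j₃ := by linarith
    rw [h] at hf
    have := sqrt_abs_add_lt j₂ j₃ h2 h3
    linarith
  · have h : j₁ = j₂ + j₃ := by linarith
    rw [h] at hf
    have := sqrt_abs_add_lt j₂ j₃ h2 h3
    linarith
  · have h : j₂ = j₁ + j₃ := by linarith
    rw [h] at hf
    have := sqrt_abs_add_lt j₁ j₃ h1 h3
    linarith
  · have h : j₃ = j₁ + j₂ := by linarith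
    rw [h] at hf
    have := sqrt_abs_add_lt j₁ j₂ h1 h2
    linarith
  · linarith
end

section
/- Let ν ≥ 1, τ > 0, γ > 0, and let v ∈ ℤ^ν, ℓ ∈ ℤ^ν, and let ω ∈ ℝ^ν satisfy the Diophantine condition |ω·ℓ| ≥ γ(1+|ℓ|)^{-τ}. Suppose j, k are natural numbers with j, k ≥ 1 satisfying the momentum constraint v·ℓ + j - k = 0, and suppose min(j,k) ≥ (|v|₁(1+|ℓ|)^{τ+1}/γ)², where |v|₁ = Σᵢ|vᵢ|. Then |ω·ℓ + √j - √k| ≥ γ/(2(1+|ℓ|)^τ). -/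
open Finset

/-! Momentum conservation bounds `|j - k|` by `|v|₁ |ℓ|₁`, so
`|√j - √k| ≤ |j - k| / (2 √(min j k))` is at most half of the Diophantine lower bound
`γ (1 + |ℓ|₁)^{-τ}` for `|ω·ℓ|` once `min j k` is large; the reverse triangle inequality does the
rest. -/

theorem abs_sum_mul_le_sum_abs_mul_sum_abs {ι R : Type*} [CommRing R] [LinearOrder R]
    [IsStrictOrderedRing R] (s : Finset ι) (x y : ι → R) :
    |∑ i ∈ s, x i * y i| ≤ (∑ i ∈ s, |x i|) * ∑ i ∈ s, |y i| := by
  rw [sum_mul]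
  calc |∑ i ∈ s, x i * y i| ≤ ∑ i ∈ s, |x i * y i| := abs_sum_le_sum_abs _ _
    _ ≤ ∑ i ∈ s, |x i| * ∑ i ∈ s, |y i| := by
      gcongr with i hi
      rw [abs_mul]
      exact mul_le_mul_of_nonneg_left (single_le_sum (fun i _ => abs_nonneg (y i)) hi)
        (abs_nonneg _)

theorem Real.abs_sqrt_sub_sqrt_le {a b : ℝ} (ha : 0 < a) (hb : 0 < b) :
    |√a - √b| ≤ |a - b| / (2 * √(min a b)) := by
  have hsum : 2 * √(min a b) ≤ √a + √b := by
    linarith [Real.sqrt_le_sqrt (min_le_left a b), Real.sqrt_le_sqrt (min_le_right a b)]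
  have hdiff : a - b = (√a - √b) * (√a + √b) := by
    rw [mul_comm, ← sq_sub_sq, Real.sq_sqrt ha.le, Real.sq_sqrt hb.le]
  rw [le_div_iff₀ (by positivity), hdiff, abs_mul, abs_of_pos (by positivity : 0 < √a + √b)]
  gcongr

theorem melnikov_from_momentum_general (ν : ℕ) (τ γ : ℝ) (hγ : 0 < γ)
    (v ℓ : Fin ν → ℤ) (ω : Fin ν → ℝ)
    (hdio : γ / (1 + ∑ i, |(ℓ i : ℝ)|) ^ τ ≤ |∑ i, ω i * (ℓ i : ℝ)|)
    (j k : ℕ) (hj : 1 ≤ j) (hk : 1 ≤ k)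
    (hmom : (∑ i, v i * ℓ i) + (j : ℤ) - (k : ℤ) = 0)
    (hbig : ((∑ i, |(v i : ℝ)|) * (1 + ∑ i, |(ℓ i : ℝ)|) ^ (τ + 1) / γ) ^ 2 ≤ (min j k : ℕ)) :
    γ / (2 * (1 + ∑ i, |(ℓ i : ℝ)|) ^ τ) ≤
      |(∑ i, ω i * (ℓ i : ℝ)) + Real.sqrt j - Real.sqrt k| := by
  set L := ∑ i, |(ℓ i : ℝ)|
  set V := ∑ i, |(v i : ℝ)|
  have hL : 0 < 1 + L := by positivity
  have hm : (0 : ℝ) < min (j : ℝ) k := lt_min (by exact_mod_cast hj) (by exact_mod_cast hk)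
  have hjk : |(j : ℝ) - k| ≤ V * L := by
    have hmomR : (j : ℝ) - k = -∑ i, (v i : ℝ) * ℓ i := by
      exact_mod_cast (by linarith : (j : ℤ) - k = -∑ i, v i * ℓ i)
    rw [hmomR, abs_neg]
    exact abs_sum_mul_le_sum_abs_mul_sum_abs _ _ _
  have hsqrt : V * (1 + L) ^ (τ + 1) ≤ γ * √(min (j : ℝ) k) := by
    rw [Nat.cast_min] at hbig
    rw [← div_le_iff₀' hγ]
    exact (Real.le_sqrt (by positivity) hm.le).mpr hbig
  have hsmall : |√j - √k| ≤ γ / (2 * (1 + L) ^ τ) :=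
    calc |√j - √k| ≤ |(j : ℝ) - k| / (2 * √(min (j : ℝ) k)) :=
          Real.abs_sqrt_sub_sqrt_le (by exact_mod_cast hj) (by exact_mod_cast hk)
      _ ≤ V * (1 + L) / (2 * √(min (j : ℝ) k)) := by
          gcongr
          exact hjk.trans (by gcongr; linarith)
      _ ≤ γ / (2 * (1 + L) ^ τ) := by
          rw [div_le_div_iff₀ (by positivity) (by positivity)]
          rw [Real.rpow_add_one hL.ne'] at hsqrt
          linarith
  calc γ / (2 * (1 + L) ^ τ) = γ / (1 + L) ^ τ - γ / (2 * (1 + L) ^ τ) := by ring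
    _ ≤ |∑ i, ω i * (ℓ i : ℝ)| - |√j - √k| := by gcongr
    _ ≤ |(∑ i, ω i * (ℓ i : ℝ)) + √j - √k| := by
          rw [add_sub_assoc]
          exact abs_sub_abs_le_abs_add _ _

/-- Second order Melnikov conditions from the Diophantine condition via momentum conservation:
if `|ω·ℓ| ≥ γ (1+|ℓ|₁)^{-τ}`, `v·ℓ + j - k = 0` and `min j k ≥ (|v|₁ (1+|ℓ|₁)^{τ+1}/γ)²`,
then `|ω·ℓ + √j - √k| ≥ γ/(2 (1+|ℓ|₁)^τ)`. -/
theorem melnikov_from_momentum (ν : ℕ) (hν : 1 ≤ ν) (τ γ : ℝ) (hτ : 0 < τ) (hγ : 0 < γ)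
    (v ℓ : Fin ν → ℤ) (ω : Fin ν → ℝ)
    (hdio : γ / (1 + ∑ i, |(ℓ i : ℝ)|) ^ τ ≤ |∑ i, ω i * (ℓ i : ℝ)|)
    (j k : ℕ) (hj : 1 ≤ j) (hk : 1 ≤ k)
    (hmom : (∑ i, v i * ℓ i) + (j : ℤ) - (k : ℤ) = 0)
    (hbig : ((∑ i, |(v i : ℝ)|) * (1 + ∑ i, |(ℓ i : ℝ)|) ^ (τ + 1) / γ) ^ 2 ≤ (min j k : ℕ)) :
    γ / (2 * (1 + ∑ i, |(ℓ i : ℝ)|) ^ τ) ≤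
      |(∑ i, ω i * (ℓ i : ℝ)) + Real.sqrt j - Real.sqrt k| :=
  melnikov_from_momentum_general ν τ γ hγ v ℓ ω hdio j k hj hk hmom hbig
end

section
/- Let j₁, j₂ be positive integers with j₁ ≠ j₂, and consider the symmetric 2×2 matrix 𝔸 with entries 𝔸₁₁ = j₁³/(2π), 𝔸₂₂ = j₂³/(2π), 𝔸₁₂ = 𝔸₂₁ = max(j₁,j₂)·min(j₁,j₂)²/π. Then det 𝔸 = (j₁³j₂³ - 4 max(j₁,j₂)² min(j₁,j₂)⁴)/(4π²) ≠ 0 if and only if j₁³ j₂³ ≠ 4 max(j₁,j₂)² min(j₁,j₂)⁴, which holds whenever max(j₁,j₂) > 4 min(j₁,j₂). -/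
open Real

/-- Twist matrix of the fourth order Birkhoff normal form for two tangential sites:
determinant formula and non-degeneracy criterion. -/
theorem twist_matrix_determinant (j₁ j₂ : ℕ) (h₁ : 0 < j₁) (h₂ : 0 < j₂) (hne : j₁ ≠ j₂)
    (A : Matrix (Fin 2) (Fin 2) ℝ)
    (hA : A = !![(j₁ : ℝ) ^ 3 / (2 * π), ((max j₁ j₂ : ℕ) : ℝ) * ((min j₁ j₂ : ℕ) : ℝ) ^ 2 / π;
                 ((max j₁ j₂ : ℕ) : ℝ) * ((min j₁ j₂ : ℕ) : ℝ) ^ 2 / π, (j₂ : ℝ) ^ 3 / (2 * π)]) :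
    A.det = ((j₁ : ℝ) ^ 3 * (j₂ : ℝ) ^ 3
        - 4 * ((max j₁ j₂ : ℕ) : ℝ) ^ 2 * ((min j₁ j₂ : ℕ) : ℝ) ^ 4) / (4 * π ^ 2) ∧
    (A.det ≠ 0 ↔ j₁ ^ 3 * j₂ ^ 3 ≠ 4 * max j₁ j₂ ^ 2 * min j₁ j₂ ^ 4) ∧
    (4 * min j₁ j₂ < max j₁ j₂ → j₁ ^ 3 * j₂ ^ 3 ≠ 4 * max j₁ j₂ ^ 2 * min j₁ j₂ ^ 4) := by
  have hπ : (π : ℝ) ≠ 0 := Real.pi_ne_zero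
  have hdet : A.det = ((j₁ : ℝ) ^ 3 * (j₂ : ℝ) ^ 3
      - 4 * ((max j₁ j₂ : ℕ) : ℝ) ^ 2 * ((min j₁ j₂ : ℕ) : ℝ) ^ 4) / (4 * π ^ 2) := by
    rw [hA, Matrix.det_fin_two_of]
    field_simp
    ring
  refine ⟨hdet, ?_, ?_⟩
  · rw [hdet, div_ne_zero_iff]
    constructor
    · rintro ⟨h, -⟩ hc
      apply h
      have hc' := congrArg (Nat.cast (R := ℝ)) hc
      push_cast at hc' h ⊢
      linarith
    · intro h
      refine ⟨?_, by positivity⟩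
      intro hc
      apply h
      have : ((j₁ ^ 3 * j₂ ^ 3 : ℕ) : ℝ) = ((4 * max j₁ j₂ ^ 2 * min j₁ j₂ ^ 4 : ℕ) : ℝ) := by
        push_cast at hc ⊢
        linarith
      exact_mod_cast this
  · intro hlt hc
    have hm : 0 < min j₁ j₂ := lt_min h₁ h₂
    have key : 4 * max j₁ j₂ ^ 2 * min j₁ j₂ ^ 4 < max j₁ j₂ ^ 3 * min j₁ j₂ ^ 3 := by
      have h1 : (4 * min j₁ j₂) * (max j₁ j₂ ^ 2 * min j₁ j₂ ^ 3)
          < max j₁ j₂ * (max j₁ j₂ ^ 2 * min j₁ j₂ ^ 3) := by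
        exact Nat.mul_lt_mul_of_lt_of_le hlt le_rfl (by positivity)
      calc 4 * max j₁ j₂ ^ 2 * min j₁ j₂ ^ 4
          = (4 * min j₁ j₂) * (max j₁ j₂ ^ 2 * min j₁ j₂ ^ 3) := by ring
        _ < max j₁ j₂ * (max j₁ j₂ ^ 2 * min j₁ j₂ ^ 3) := h1
        _ = max j₁ j₂ ^ 3 * min j₁ j₂ ^ 3 := by ring
    have heq : j₁ ^ 3 * j₂ ^ 3 = max j₁ j₂ ^ 3 * min j₁ j₂ ^ 3 := by
      rcases le_total j₁ j₂ with h | h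
      · rw [max_eq_right h, min_eq_left h]; ring
      · rw [max_eq_left h, min_eq_right h]
    omega
end
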